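/- arXiv:0709.3328 — 4 statements merged into one kernel-verified Lean document; each statement's English description precedes it below -/
import Mathlib

section
/- Let a, b, c > 0 satisfy b·c^(1/2) < (a/2)^(3/2). If φ is a nonnegative absolutely continuous function on [t₀, ∞) with φ(t₀) = 0 satisfying φ'(t) ≤ -a·φ(t) + b·φ(t)^(3/2) + c for almost every t ≥ t₀, then φ(t) ≤ 2c/a for all t ≥ t₀. -/
/-!
At `M = 2c/a` the right-hand side `-a M + b M^{3/2} + c` equals `b M^{3/2} - c`, which is negative
precisely because `b √c < (a/2)^{3/2}`. By continuity it stays negative on a band `[M, N)`. If `φ`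
ever exceeded `M`, it would cross this band upwards on some interval, yet its increase there is
bounded by the integral of the right-hand side along `φ`, which is `≤ 0`.
-/

open MeasureTheory Set

theorem sub_le_integral_of_hasDeriv_right_of_ae_le {g g' φ : ℝ → ℝ} {a b : ℝ} (hab : a ≤ b)
    (hcont : ContinuousOn g (Icc a b))
    (hderiv : ∀ x ∈ Ioo a b, HasDerivWithinAt g (g' x) (Ioi x) x)
    (φint : IntegrableOn φ (Icc a b)) (hφg : ∀ᵐ x, x ∈ Ioo a b → g' x ≤ φ x) :
    g b - g a ≤ ∫ y in a..b, φ y := by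
  -- `max g' φ` bounds `g'` everywhere and agrees with `φ` almost everywhere.
  have hmax : (fun x ↦ max (g' x) (φ x)) =ᵐ[volume.restrict (Ioo a b)] φ := by
    filter_upwards [ae_restrict_mem measurableSet_Ioo, ae_restrict_of_ae hφg] with x hx hle
    exact max_eq_right (hle hx)
  have hint : IntegrableOn (fun x ↦ max (g' x) (φ x)) (Icc a b) := by
    rw [integrableOn_Icc_iff_integrableOn_Ioo] at φint ⊢
    exact φint.congr hmax.symm
  calc g b - g a ≤ ∫ y in a..b, max (g' y) (φ y) :=
        intervalIntegral.sub_le_integral_of_hasDeriv_right_of_le hab hcont hderiv hint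
          fun x _ ↦ le_max_left _ _
    _ = ∫ y in a..b, φ y := by
        simp only [intervalIntegral.integral_of_le hab, integral_Ioc_eq_integral_Ioo]
        exact integral_congr_ae hmax

theorem ContinuousOn.exists_crossing {f : ℝ → ℝ} {a b M N : ℝ} (hf : ContinuousOn f (Icc a b))
    (hab : a ≤ b) (ha : f a ≤ M) (hMN : M < N) (hb : N ≤ f b) :
    ∃ s u, a ≤ s ∧ s < u ∧ u ≤ b ∧ f s ≤ M ∧ N ≤ f u ∧ MapsTo f (Ioo s u) (Ioo M N) := by
  set U := Icc a b ∩ f ⁻¹' Ici N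
  have hu : sInf U ∈ U :=
    (hf.preimage_isClosed_of_isClosed isClosed_Icc isClosed_Ici).csInf_mem
      ⟨b, ⟨hab, le_rfl⟩, hb⟩ ⟨a, fun x hx ↦ hx.1.1⟩
  set u := sInf U
  have hfS : ContinuousOn f (Icc a u) := hf.mono (Icc_subset_Icc_right hu.1.2)
  set S := Icc a u ∩ f ⁻¹' Iic M
  have hs : sSup S ∈ S :=
    (hfS.preimage_isClosed_of_isClosed isClosed_Icc isClosed_Iic).csSup_mem
      ⟨a, ⟨le_rfl, hu.1.1⟩, ha⟩ ⟨u, fun x hx ↦ hx.1.2⟩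
  set s := sSup S
  have hsu : s < u := hs.1.2.lt_of_ne fun h ↦ by
    have : N ≤ f s := h ▸ hu.2
    linarith [show f s ≤ M from hs.2]
  refine ⟨s, u, hs.1.1, hsu, hu.1.2, hs.2, hu.2, fun x hx ↦ ⟨?_, ?_⟩⟩
  · by_contra! hxM
    have : x ≤ s := le_csSup ⟨u, fun y hy ↦ hy.1.2⟩ ⟨⟨hs.1.1.trans hx.1.le, hx.2.le⟩, hxM⟩
    linarith [hx.1]
  · by_contra! hxN
    have : u ≤ x := csInf_le ⟨a, fun y hy ↦ hy.1.1⟩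
      ⟨⟨hs.1.1.trans hx.1.le, hx.2.le.trans hu.1.2⟩, hxN⟩
    linarith [hx.2]

theorem le_of_ae_deriv_le_comp_of_neg {F φ φ' : ℝ → ℝ} {t₀ M : ℝ} (hF : Continuous F)
    (hFM : F M < 0) (hderiv : ∀ t, t₀ ≤ t → HasDerivAt φ (φ' t) t)
    (hle : ∀ᵐ t, t₀ ≤ t → φ' t ≤ F (φ t)) (hinit : φ t₀ ≤ M) :
    ∀ t, t₀ ≤ t → φ t ≤ M := by
  intro t ht
  by_contra! hgt
  obtain ⟨N, hMN, hFN⟩ : ∃ N, M < N ∧ Ico M N ⊆ {x | F x < 0} :=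
    exists_Ico_subset_of_mem_nhds (hF.continuousAt.eventually_lt continuousAt_const hFM)
      ⟨M + 1, by linarith⟩
  have hφ : ContinuousOn φ (Ici t₀) := fun r hr ↦ (hderiv r hr).continuousAt.continuousWithinAt
  obtain ⟨s, u, hts, hsu, -, hφs, hφu, hband⟩ :=
    (hφ.mono Icc_subset_Ici_self).exists_crossing ht hinit (lt_min hMN hgt) (min_le_right _ _)
  have hφsu : ContinuousOn φ (Icc s u) := hφ.mono fun r hr ↦ hts.trans hr.1
  have hrise : φ u - φ s ≤ ∫ y in s..u, F (φ y) :=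
    sub_le_integral_of_hasDeriv_right_of_ae_le hsu.le hφsu
      (fun x hx ↦ (hderiv x (hts.trans hx.1.le)).hasDerivWithinAt)
      (hF.comp_continuousOn hφsu).integrableOn_Icc
      (by filter_upwards [hle] with x hx hxI using hx (hts.trans hxI.1.le))
  have hfall : ∫ y in s..u, F (φ y) ≤ 0 := by
    rw [intervalIntegral.integral_of_le hsu.le, integral_Ioc_eq_integral_Ioo]
    refine setIntegral_nonpos measurableSet_Ioo fun x hx ↦ (hFN ?_).le
    exact ⟨(hband hx).1.le, (hband hx).2.trans_le (min_le_left _ _)⟩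
  linarith [min_le_left N (φ t), lt_min hMN hgt]

theorem stmt_0_general (a b c t₀ : ℝ) (ha : 0 < a) (hc : 0 < c)
    (hcond : b * Real.sqrt c < (a / 2) ^ ((3:ℝ)/2))
    (φ φ' : ℝ → ℝ)
    (hderiv : ∀ t, t₀ ≤ t → HasDerivAt φ (φ' t) t)
    (hineq : ∀ᵐ t ∂volume, t₀ ≤ t → φ' t ≤ -a * φ t + b * φ t ^ ((3:ℝ)/2) + c)
    (hinit : φ t₀ = 0) :
    ∀ t, t₀ ≤ t → φ t ≤ 2 * c / a := by
  have hP : 0 < (a / 2) ^ ((3:ℝ)/2) := by positivity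
  have hc32 : c ^ ((3:ℝ)/2) = c * Real.sqrt c := by
    rw [show (3:ℝ)/2 = 1 + 1/2 by norm_num, Real.rpow_add hc, Real.rpow_one, Real.sqrt_eq_rpow]
  have hM32 : (2 * c / a) ^ ((3:ℝ)/2) = c * Real.sqrt c / (a / 2) ^ ((3:ℝ)/2) := by
    rw [show 2 * c / a = c / (a / 2) by field_simp, Real.div_rpow hc.le (by positivity), hc32]
  have hbM : b * (2 * c / a) ^ ((3:ℝ)/2) < c := by
    rw [hM32, mul_div_assoc', div_lt_iff₀ hP]
    nlinarith [mul_lt_mul_of_pos_left hcond hc]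
  have hFM : -a * (2 * c / a) + b * (2 * c / a) ^ ((3:ℝ)/2) + c < 0 := by
    rw [show -a * (2 * c / a) = -(2 * c) by field_simp]
    linarith
  exact le_of_ae_deriv_le_comp_of_neg (F := fun x ↦ -a * x + b * x ^ ((3:ℝ)/2) + c)
    (by fun_prop (disch := norm_num)) hFM hderiv hineq (by rw [hinit]; positivity)

theorem stmt_0 (a b c t₀ : ℝ) (ha : 0 < a) (hb : 0 < b) (hc : 0 < c)
    (ht₀ : 0 ≤ t₀)
    (hcond : b * Real.sqrt c < (a / 2) ^ ((3:ℝ)/2))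
    (φ φ' : ℝ → ℝ)
    (hnonneg : ∀ t, t₀ ≤ t → 0 ≤ φ t)
    (hderiv : ∀ t, t₀ ≤ t → HasDerivAt φ (φ' t) t)
    (hineq : ∀ᵐ t ∂volume, t₀ ≤ t → φ' t ≤ -a * φ t + b * φ t ^ ((3:ℝ)/2) + c)
    (hinit : φ t₀ = 0) :
    ∀ t, t₀ ≤ t → φ t ≤ 2 * c / a :=
  stmt_0_general a b c t₀ ha hc hcond φ φ' hderiv hineq hinit
end

section
/- Let a(t) and b(t) be locally integrable functions on (0,∞) and T > 0 such that liminf_{t→∞} (1/T)∫_t^{t+T} a(τ)dτ > 0, limsup_{t→∞} (1/T)∫_t^{t+T} max(-a(τ),0)dτ < ∞, and limsup_{t→∞} (1/T)∫_t^{t+T} max(b(τ),0)dτ = 0. If φ is a nonnegative absolutely continuous function on [0,∞) satisfying φ'(t) + a(t)φ(t) ≤ b(t) almost everywhere, then φ(t) → 0 as t → ∞. -/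
/-!
`φ` is absolutely continuous, since its derivative is bounded above by the integrable
`b - a φ` and hence integrable, so multiplying by the integrating factor `exp (∫ a)` gives the
Gronwall bound
`φ t ≤ φ s * exp (-∫ₛᵗ a) + ∫ₛᵗ b u * exp (-∫ᵤᵗ a) du`.
Past a time `s` after which every window of length `T` carries `∫ a ≥ α T`, `∫ a⁻ ≤ M T` and
`∫ b⁺ ≤ W`, chaining windows gives `∫ᵤᵗ a ≥ α (t - u) - (α + M) T`, and summing the windows
backwards from `t` as a geometric series bounds the second term by
`exp ((α + M) T) * W / (1 - exp (-α T))`. As `W` can be taken arbitrarily small, `φ t → 0`.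
-/

open MeasureTheory Filter Set intervalIntegral Topology
open scoped NNReal

namespace AbsolutelyContinuousOnInterval

variable {X Y : Type*} [PseudoMetricSpace X] [PseudoMetricSpace Y] {a b : ℝ}

theorem congr {f g : ℝ → X} (hf : AbsolutelyContinuousOnInterval f a b)
    (hfg : EqOn f g (uIcc a b)) : AbsolutelyContinuousOnInterval g a b := by
  refine hf.congr' (eventually_inf_principal.2 (Eventually.of_forall fun E hE => ?_))
  exact Finset.sum_congr rfl fun i hi => by rw [hfg (hE.1 i hi).1, hfg (hE.1 i hi).2]

theorem comp_lipschitzOnWith {f : ℝ → X} {g : X → Y} {K : ℝ≥0}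
    (hf : AbsolutelyContinuousOnInterval f a b) (hg : LipschitzOnWith K g (f '' uIcc a b)) :
    AbsolutelyContinuousOnInterval (g ∘ f) a b := by
  rw [absolutelyContinuousOnInterval_iff] at hf ⊢
  intro ε hε
  obtain ⟨δ, hδ, hfδ⟩ := hf (ε / (K + 1)) (by positivity)
  refine ⟨δ, hδ, fun E hE hEδ => ?_⟩
  calc ∑ i ∈ Finset.range E.1, dist (g (f (E.2 i).1)) (g (f (E.2 i).2))
      ≤ ∑ i ∈ Finset.range E.1, K * dist (f (E.2 i).1) (f (E.2 i).2) :=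
        Finset.sum_le_sum fun i hi => hg.dist_le_mul _ (mem_image_of_mem f (hE.1 i hi).1) _
          (mem_image_of_mem f (hE.1 i hi).2)
    _ = K * ∑ i ∈ Finset.range E.1, dist (f (E.2 i).1) (f (E.2 i).2) := (Finset.mul_sum ..).symm
    _ ≤ K * (ε / (K + 1)) := by gcongr; exact (hfδ E hE hEδ).le
    _ < ε := by
      rw [mul_div_assoc', div_lt_iff₀ (by positivity)]
      nlinarith

theorem exp {f : ℝ → ℝ} (hf : AbsolutelyContinuousOnInterval f a b) :
    AbsolutelyContinuousOnInterval (fun x => Real.exp (f x)) a b := by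
  obtain ⟨C, hC⟩ := hf.exists_bound
  obtain ⟨K, hK⟩ := (Real.contDiff_exp (n := 1)).contDiffOn.exists_lipschitzOnWith
    (s := Icc (-C) C) (by norm_num) (convex_Icc _ _) isCompact_Icc
  refine hf.comp_lipschitzOnWith (g := Real.exp) (hK.mono ?_)
  rintro _ ⟨x, hx, rfl⟩
  exact abs_le.1 (hC x hx)

end AbsolutelyContinuousOnInterval

theorem intervalIntegrable_deriv_of_ae_le {f f' g : ℝ → ℝ} {a b : ℝ} (hab : a ≤ b)
    (hderiv : ∀ x ∈ Icc a b, HasDerivAt f (f' x) x) (hg : IntegrableOn g (Icc a b))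
    (hle : ∀ᵐ x, x ∈ Icc a b → f' x ≤ g x) : IntervalIntegrable f' volume a b := by
  have hgI : IntervalIntegrable g volume a b :=
    (intervalIntegrable_iff_integrableOn_Icc_of_le hab).2 hg
  have hsub : ∀ u ∈ Icc a b, ∀ v ∈ Icc a b, u ≤ v → f v - f u ≤ ∫ x in u..v, g x := by
    intro u hu v hv huv
    have huv_sub : Icc u v ⊆ Icc a b := Icc_subset_Icc hu.1 hv.2
    -- `max f' g` majorizes `f'` everywhere and is integrable, being `g` almost everywhere
    have hmax : (fun x => max (f' x) (g x)) =ᵐ[volume.restrict (Icc u v)] g :=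
      (ae_restrict_iff' measurableSet_Icc).2 <| hle.mono fun x hx hxI =>
        max_eq_right (hx (huv_sub hxI))
    calc f v - f u ≤ ∫ x in u..v, max (f' x) (g x) :=
          sub_le_integral_of_hasDeriv_right_of_le huv
            (fun x hx => (hderiv x (huv_sub hx)).continuousAt.continuousWithinAt)
            (fun x hx => (hderiv x (huv_sub (Ioo_subset_Icc_self hx))).hasDerivWithinAt)
            ((hg.mono_set huv_sub).congr_fun_ae hmax.symm) (fun x _ => le_max_left _ _)
      _ = ∫ x in u..v, g x :=
          integral_congr_ae_restrict (ae_restrict_of_ae_restrict_of_subset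
            (by rw [uIoc_of_le huv]; exact Ioc_subset_Icc_self) hmax)
  -- so `f` is a primitive of `g` minus a monotone function, whose derivative is integrable
  set F : ℝ → ℝ := fun x => (∫ y in a..x, g y) - f x
  have hF : MonotoneOn F (uIcc a b) := by
    rw [uIcc_of_le hab]
    intro u hu v hv huv
    have hu' : u ∈ uIcc a b := by rwa [uIcc_of_le hab]
    have hv' : v ∈ uIcc a b := by rwa [uIcc_of_le hab]
    have hsplit := integral_interval_sub_left (hgI.mono_set (uIcc_subset_uIcc_left hv'))
      (hgI.mono_set (uIcc_subset_uIcc_left hu'))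
    simp only [F]
    linarith [hsub u hu v hv huv]
  refine (hgI.sub hF.intervalIntegrable_deriv).congr_ae ?_
  rw [uIoc_of_le hab]
  filter_upwards [ae_restrict_of_ae hgI.ae_hasDerivAt_integral, ae_restrict_mem measurableSet_Ioc]
    with x hx hxI
  have hxI' : x ∈ Icc a b := Ioc_subset_Icc_self hxI
  rw [uIcc_of_le hab] at hx
  have hFx := ((hx hxI' a (left_mem_Icc.2 hab)).fun_sub (hderiv x hxI')).deriv
  show g x - deriv F x = f' x
  rw [hFx]
  ring

theorem absolutelyContinuousOnInterval_of_hasDerivAt {f f' : ℝ → ℝ} {a b : ℝ}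
    (hderiv : ∀ x ∈ uIcc a b, HasDerivAt f (f' x) x) (hint : IntervalIntegrable f' volume a b) :
    AbsolutelyContinuousOnInterval f a b := by
  have hprim : AbsolutelyContinuousOnInterval (fun x => f a + ∫ y in a..x, f' y) a b :=
    (LipschitzWith.const (f a)).lipschitzOnWith.absolutelyContinuousOnInterval.fun_add
      (hint.absolutelyContinuousOnInterval_intervalIntegral left_mem_uIcc)
  refine hprim.congr fun x hx => ?_
  have hax : uIcc a x ⊆ uIcc a b := uIcc_subset_uIcc left_mem_uIcc hx
  beta_reduce
  rw [integral_eq_sub_of_hasDerivAt (fun y hy => hderiv y (hax hy)) (hint.mono_set hax)]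
  ring

theorem mul_exp_integral_sub_le {a b φ φ' : ℝ → ℝ} {s t : ℝ} (hst : s ≤ t)
    (ha : IntegrableOn a (Icc s t)) (hb : IntegrableOn b (Icc s t))
    (hderiv : ∀ x ∈ Icc s t, HasDerivAt φ (φ' x) x)
    (hineq : ∀ᵐ x, x ∈ Icc s t → φ' x + a x * φ x ≤ b x) :
    φ t * Real.exp (∫ τ in s..t, a τ) - φ s ≤
      ∫ u in s..t, b u * Real.exp (∫ τ in s..u, a τ) := by
  have haI : IntervalIntegrable a volume s t :=
    (intervalIntegrable_iff_integrableOn_Icc_of_le hst).2 ha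
  have hbI : IntervalIntegrable b volume s t :=
    (intervalIntegrable_iff_integrableOn_Icc_of_le hst).2 hb
  set E : ℝ → ℝ := fun u => Real.exp (∫ τ in s..u, a τ)
  have hE : AbsolutelyContinuousOnInterval E s t :=
    (haI.absolutelyContinuousOnInterval_intervalIntegral left_mem_uIcc).exp
  have hφc : ContinuousOn φ (Icc s t) := fun x hx =>
    (hderiv x hx).continuousAt.continuousWithinAt
  have hφ'I : IntervalIntegrable φ' volume s t :=
    intervalIntegrable_deriv_of_ae_le hst hderiv (hb.sub (ha.mul_continuousOn hφc isCompact_Icc))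
      (hineq.mono fun x hx hxI => by simp only [Pi.sub_apply]; linarith [hx hxI])
  have hφ : AbsolutelyContinuousOnInterval φ s t :=
    absolutelyContinuousOnInterval_of_hasDerivAt (by rwa [uIcc_of_le hst]) hφ'I
  have hψ := hφ.fun_mul hE
  have hEs : E s = 1 := by simp [E]
  calc φ t * E t - φ s = ∫ x in s..t, deriv (fun x => φ x * E x) x := by
        rw [hψ.integral_deriv_eq_sub, hEs, mul_one]
    _ ≤ ∫ u in s..t, b u * E u := by
      refine integral_mono_ae_restrict hst hψ.intervalIntegrable_deriv
        (hbI.mul_continuousOn (uIcc_of_le hst ▸ hE.continuousOn)) ?_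
      -- by Lebesgue's differentiation theorem, `E' = a * E` almost everywhere
      filter_upwards [ae_restrict_of_ae haI.ae_hasDerivAt_integral, ae_restrict_of_ae hineq,
        ae_restrict_mem measurableSet_Icc] with x hA hx hxI
      have hxI' : x ∈ uIcc s t := by rwa [uIcc_of_le hst]
      rw [((hderiv x hxI).fun_mul (hA hxI' s left_mem_uIcc).exp).deriv]
      have := mul_le_mul_of_nonneg_right (hx hxI) (Real.exp_pos (∫ τ in s..x, a τ)).le
      simp only [E]
      linarith

theorem le_mul_exp_neg_integral_add {a b φ φ' : ℝ → ℝ} {s t : ℝ} (hst : s ≤ t)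
    (ha : IntegrableOn a (Icc s t)) (hb : IntegrableOn b (Icc s t))
    (hderiv : ∀ x ∈ Icc s t, HasDerivAt φ (φ' x) x)
    (hineq : ∀ᵐ x, x ∈ Icc s t → φ' x + a x * φ x ≤ b x) :
    φ t ≤ φ s * Real.exp (-∫ τ in s..t, a τ) +
      ∫ u in s..t, b u * Real.exp (-∫ τ in u..t, a τ) := by
  have haI : IntervalIntegrable a volume s t :=
    (intervalIntegrable_iff_integrableOn_Icc_of_le hst).2 ha
  have hweight : ∫ u in s..t, b u * Real.exp (-∫ τ in u..t, a τ) =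
      (∫ u in s..t, b u * Real.exp (∫ τ in s..u, a τ)) * Real.exp (-∫ τ in s..t, a τ) := by
    rw [← intervalIntegral.integral_mul_const]
    refine integral_congr fun u hu => ?_
    have hsplit := integral_add_adjacent_intervals (haI.mono_set (uIcc_subset_uIcc_left hu))
      (haI.mono_set (uIcc_subset_uIcc_right hu))
    rw [mul_assoc, ← Real.exp_add, ← hsplit]
    ring_nf
  rw [hweight, ← add_mul]
  calc φ t = φ t * Real.exp (∫ τ in s..t, a τ) * Real.exp (-∫ τ in s..t, a τ) := by
        rw [mul_assoc, ← Real.exp_add, add_neg_cancel, Real.exp_zero, mul_one]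
    _ ≤ _ := by
        gcongr
        linarith [mul_exp_integral_sub_le hst ha hb hderiv hineq]

theorem IntervalIntegrable.max_zero {f : ℝ → ℝ} {μ : Measure ℝ} {u v : ℝ}
    (hf : IntervalIntegrable f μ u v) : IntervalIntegrable (fun x => max (f x) 0) μ u v :=
  ⟨hf.1.pos_part, hf.2.pos_part⟩

theorem MeasureTheory.LocallyIntegrableOn.max_zero {f : ℝ → ℝ} {s : Set ℝ}
    (hf : LocallyIntegrableOn f s) : LocallyIntegrableOn (fun x => max (f x) 0) s :=
  fun x hx => let ⟨t, ht, hint⟩ := hf x hx; ⟨t, ht, hint.pos_part⟩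

theorem MeasureTheory.LocallyIntegrableOn.intervalIntegrable_of_Ici {E : Type*}
    [NormedAddCommGroup E] {f : ℝ → E} {s u v : ℝ} (hf : LocallyIntegrableOn f (Ici s))
    (hu : s ≤ u) (hv : s ≤ v) : IntervalIntegrable f volume u v :=
  (hf.integrableOn_compact_subset (fun _ hx => (le_min hu hv).trans hx.1)
    isCompact_uIcc).intervalIntegrable

theorem forall_ge_of_Icc_of_sub_step {P : ℝ → Prop} {s T : ℝ} (hT : 0 < T)
    (hbase : ∀ t ∈ Icc s (s + T), P t) (hstep : ∀ t, s + T < t → P (t - T) → P t) :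
    ∀ t, s ≤ t → P t := by
  suffices h : ∀ n : ℕ, ∀ t, s ≤ t → t ≤ s + n * T → P t by
    intro t ht
    obtain ⟨n, hn⟩ := exists_nat_ge ((t - s) / T)
    exact h n t ht (by rw [div_le_iff₀ hT] at hn; linarith)
  intro n
  induction n with
  | zero => exact fun t h1 h2 => hbase t ⟨h1, by simp at h2; linarith⟩
  | succ n ih =>
    intro t h1 h2
    rcases le_or_gt t (s + T) with ht | ht
    · exact hbase t ⟨h1, ht⟩
    · exact hstep t ht (ih (t - T) (by linarith) (by push_cast at h2; linarith))

theorem sub_le_integral_of_window_bounds {a : ℝ → ℝ} {s T α M : ℝ} (hT : 0 < T) (hα : 0 ≤ α)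
    (ha : LocallyIntegrableOn a (Ici s))
    (hwin : ∀ r, s ≤ r → α * T ≤ ∫ τ in r..r + T, a τ)
    (hneg : ∀ r, s ≤ r → ∫ τ in r..r + T, max (-a τ) 0 ≤ M * T) {u t : ℝ} (hu : s ≤ u)
    (hut : u ≤ t) : α * (t - u) - (α + M) * T ≤ ∫ τ in u..t, a τ := by
  have hI : ∀ {v w}, u ≤ v → u ≤ w → IntervalIntegrable a volume v w := fun hv hw =>
    ha.intervalIntegrable_of_Ici (hu.trans hv) (hu.trans hw)
  refine forall_ge_of_Icc_of_sub_step
    (P := fun t => α * (t - u) - (α + M) * T ≤ ∫ τ in u..t, a τ)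
    hT (fun t ht => ?_) (fun t ht ih => ?_) t hut
  · have hneg_le : ∫ τ in u..t, max (-a τ) 0 ≤ ∫ τ in u..u + T, max (-a τ) 0 :=
      integral_mono_interval le_rfl ht.1 ht.2 (Eventually.of_forall fun _ => le_max_right _ _)
        (hI le_rfl (by linarith)).neg.max_zero
    have hmin : -∫ τ in u..t, max (-a τ) 0 ≤ ∫ τ in u..t, a τ := by
      rw [← intervalIntegral.integral_neg]
      exact integral_mono_on ht.1 (hI le_rfl ht.1).neg.max_zero.neg (hI le_rfl ht.1)
        fun x _ => by simp only [neg_le, le_max_iff, le_refl, true_or]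
    nlinarith [hneg u hu, ht.2]
  · have hsplit := integral_add_adjacent_intervals (hI le_rfl (by linarith : u ≤ t - T))
      (hI (by linarith : u ≤ t - T) (by linarith : u ≤ t))
    have hlast := hwin (t - T) (by linarith)
    rw [sub_add_cancel] at hlast
    linarith

theorem integral_mul_exp_le_of_window_le {f : ℝ → ℝ} {s T α W : ℝ} (hT : 0 < T) (hα : 0 < α)
    (hf : LocallyIntegrableOn f (Ici s)) (hf0 : ∀ u, 0 ≤ f u)
    (hwin : ∀ r, s ≤ r → ∫ u in r..r + T, f u ≤ W) {t : ℝ} (hst : s ≤ t) :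
    ∫ u in s..t, f u * Real.exp (-(α * (t - u))) ≤ W / (1 - Real.exp (-(α * T))) := by
  set q := Real.exp (-(α * T))
  have hq0 : 0 < q := Real.exp_pos _
  have hq1 : q < 1 := Real.exp_lt_one_iff.2 (by nlinarith)
  have hW : W ≤ W / (1 - q) :=
    le_div_self ((integral_nonneg (by linarith) fun u _ => hf0 u).trans (hwin s le_rfl))
      (by linarith) (by linarith)
  have hI : ∀ {v w}, s ≤ v → s ≤ w → IntervalIntegrable f volume v w := fun hv hw =>
    hf.intervalIntegrable_of_Ici hv hw
  have hIexp : ∀ {v w} (t : ℝ), s ≤ v → s ≤ w →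
      IntervalIntegrable (fun u => f u * Real.exp (-(α * (t - u)))) volume v w := fun t hv hw =>
    (hI hv hw).mul_continuousOn (by fun_prop)
  have hweight : ∀ {v w} (t : ℝ), s ≤ v → v ≤ w → w ≤ t →
      ∫ u in v..w, f u * Real.exp (-(α * (t - u))) ≤ ∫ u in v..w, f u := fun t hv hvw hwt =>
    integral_mono_on hvw (hIexp t hv (hv.trans hvw)) (hI hv (hv.trans hvw)) fun u hu =>
      mul_le_of_le_one_right (hf0 u) (Real.exp_le_one_iff.2 (by nlinarith [hu.2]))
  refine forall_ge_of_Icc_of_sub_step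
    (P := fun t => ∫ u in s..t, f u * Real.exp (-(α * (t - u))) ≤ W / (1 - q))
    hT (fun t ht => ?_) (fun t ht ih => ?_) t hst
  · calc ∫ u in s..t, f u * Real.exp (-(α * (t - u))) ≤ ∫ u in s..t, f u :=
          hweight t le_rfl ht.1 le_rfl
      _ ≤ ∫ u in s..s + T, f u := integral_mono_interval le_rfl ht.1 ht.2
          (Eventually.of_forall hf0) (hI le_rfl (by linarith))
      _ ≤ W / (1 - q) := (hwin s le_rfl).trans hW
  · have hsT : s ≤ t - T := by linarith
    have hshift : ∫ u in s..t - T, f u * Real.exp (-(α * (t - u)))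
        = q * ∫ u in s..t - T, f u * Real.exp (-(α * (t - T - u))) := by
      rw [← intervalIntegral.integral_const_mul]
      refine integral_congr fun u _ => ?_
      rw [mul_left_comm, ← Real.exp_add]
      ring_nf
    have hlast : ∫ u in t - T..t, f u * Real.exp (-(α * (t - u))) ≤ W := by
      have := hwin (t - T) hsT
      rw [sub_add_cancel] at this
      exact (hweight t hsT (by linarith) le_rfl).trans this
    have hgeom : q * (W / (1 - q)) + W = W / (1 - q) := by
      field_simp [(by linarith : (1 - q) ≠ 0)]
      ring
    rw [← integral_add_adjacent_intervals (hIexp t le_rfl hsT) (hIexp t hsT (by linarith)),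
      hshift]
    linarith [mul_le_mul_of_nonneg_left ih hq0.le]

theorem le_of_window_bounds {a b φ φ' : ℝ → ℝ} {s T α M W : ℝ} (hT : 0 < T) (hα : 0 < α)
    (ha : LocallyIntegrableOn a (Ici s)) (hb : LocallyIntegrableOn b (Ici s))
    (hwin_a : ∀ r, s ≤ r → α * T ≤ ∫ τ in r..r + T, a τ)
    (hwin_neg : ∀ r, s ≤ r → ∫ τ in r..r + T, max (-a τ) 0 ≤ M * T)
    (hwin_b : ∀ r, s ≤ r → ∫ τ in r..r + T, max (b τ) 0 ≤ W)
    (hφs : 0 ≤ φ s) (hderiv : ∀ t, s ≤ t → HasDerivAt φ (φ' t) t)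
    (hineq : ∀ᵐ t, s ≤ t → φ' t + a t * φ t ≤ b t) {t : ℝ} (hst : s ≤ t) :
    φ t ≤ Real.exp ((α + M) * T) *
      (φ s * Real.exp (-(α * (t - s))) + W / (1 - Real.exp (-(α * T)))) := by
  set K := Real.exp ((α + M) * T)
  have hdecay : ∀ u ∈ Icc s t, Real.exp (-∫ τ in u..t, a τ) ≤ K * Real.exp (-(α * (t - u))) :=
    fun u hu => by
      rw [← Real.exp_add]
      exact Real.exp_le_exp.2
        (by linarith [sub_le_integral_of_window_bounds hT hα.le ha hwin_a hwin_neg hu.1 hu.2])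
  have haI : IntegrableOn a (Icc s t) :=
    ha.integrableOn_compact_subset Icc_subset_Ici_self isCompact_Icc
  have hbI : IntervalIntegrable (fun u => max (b u) 0) volume s t :=
    hb.max_zero.intervalIntegrable_of_Ici le_rfl hst
  calc φ t ≤ φ s * Real.exp (-∫ τ in s..t, a τ) +
        ∫ u in s..t, b u * Real.exp (-∫ τ in u..t, a τ) :=
        le_mul_exp_neg_integral_add hst haI
          (hb.integrableOn_compact_subset Icc_subset_Ici_self isCompact_Icc)
          (fun x hx => hderiv x hx.1) (hineq.mono fun x hx hxI => hx hxI.1)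
    _ ≤ φ s * (K * Real.exp (-(α * (t - s)))) +
        ∫ u in s..t, K * (max (b u) 0 * Real.exp (-(α * (t - u)))) := by
      gcongr φ s * ?_ + ?_
      · exact hdecay s ⟨le_rfl, hst⟩
      · refine integral_mono_on hst ?_ ((hbI.mul_continuousOn (by fun_prop)).const_mul K)
          fun u hu => ?_
        · have hIcc : IntegrableOn a (uIcc s t) := (uIcc_of_le hst).symm ▸ haI
          exact (hb.intervalIntegrable_of_Ici le_rfl hst).mul_continuousOn
            (continuousOn_primitive_interval_left hIcc).neg.rexp
        · calc b u * Real.exp (-∫ τ in u..t, a τ)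
              ≤ max (b u) 0 * Real.exp (-∫ τ in u..t, a τ) := by
                gcongr; exact le_max_left _ _
            _ ≤ max (b u) 0 * (K * Real.exp (-(α * (t - u)))) := by
                gcongr; exact hdecay u hu
            _ = _ := by ring
    _ = K * (φ s * Real.exp (-(α * (t - s))) +
        ∫ u in s..t, max (b u) 0 * Real.exp (-(α * (t - u)))) := by
      rw [intervalIntegral.integral_const_mul]; ring
    _ ≤ _ := by
      gcongr
      exact integral_mul_exp_le_of_window_le hT hα hb.max_zero (fun _ => le_max_right _ _)
        hwin_b hst

theorem exists_pos_eventually_lt_of_liminf_pos {ι : Type*} {l : Filter ι} {u : ι → ℝ}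
    (h : 0 < liminf u l) : ∃ c > 0, ∀ᶠ x in l, c < u x := by
  -- an unbounded-below `u` would have the junk value `liminf u l = 0`
  have hbdd : IsBoundedUnder (· ≥ ·) l u := by
    by_contra hnot
    exact h.ne' (Real.liminf_of_not_isBoundedUnder hnot)
  exact ⟨liminf u l / 2, half_pos h, eventually_lt_of_lt_liminf (half_lt_self h) hbdd⟩

theorem tendsto_zero_of_window_bounds {a b φ φ' : ℝ → ℝ} {t₀ T α M : ℝ} (hT : 0 < T)
    (hα : 0 < α) (ha : LocallyIntegrableOn a (Ioi t₀)) (hb : LocallyIntegrableOn b (Ioi t₀))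
    (hwin_a : ∀ᶠ r in atTop, α * T ≤ ∫ τ in r..r + T, a τ)
    (hwin_neg : ∀ᶠ r in atTop, ∫ τ in r..r + T, max (-a τ) 0 ≤ M * T)
    (hwin_b : ∀ ε > 0, ∀ᶠ r in atTop, ∫ τ in r..r + T, max (b τ) 0 ≤ ε)
    (hnonneg : ∀ t, t₀ ≤ t → 0 ≤ φ t) (hderiv : ∀ t, t₀ ≤ t → HasDerivAt φ (φ' t) t)
    (hineq : ∀ᵐ t, t₀ ≤ t → φ' t + a t * φ t ≤ b t) : Tendsto φ atTop (𝓝 0) := by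
  set K := Real.exp ((α + M) * T)
  set q := Real.exp (-(α * T))
  have hq : 0 < 1 - q := sub_pos.2 (Real.exp_lt_one_iff.2 (by nlinarith))
  refine tendsto_order.2 ⟨fun δ hδ => (eventually_ge_atTop t₀).mono fun t ht =>
    hδ.trans_le (hnonneg t ht), fun δ hδ => ?_⟩
  set W := δ * (1 - q) / (2 * K)
  have hKW : K * (W / (1 - q)) < δ := by
    have hK : K ≠ 0 := (Real.exp_pos _).ne'
    have : K * (W / (1 - q)) = δ / 2 := by
      simp only [W]
      field_simp
    linarith
  obtain ⟨s, hs⟩ := eventually_atTop.1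
    (hwin_a.and (hwin_neg.and ((hwin_b W (by positivity)).and (eventually_gt_atTop t₀))))
  have hst₀ : t₀ < s := (hs s le_rfl).2.2.2
  have hIci : Ici s ⊆ Ioi t₀ := Ici_subset_Ioi.2 hst₀
  have hbound : ∀ t, s ≤ t → φ t ≤ K * (φ s * Real.exp (-(α * (t - s))) + W / (1 - q)) :=
    fun t hst => le_of_window_bounds hT hα (ha.mono_set hIci) (hb.mono_set hIci)
      (fun r hr => (hs r hr).1) (fun r hr => (hs r hr).2.1) (fun r hr => (hs r hr).2.2.1)
      (hnonneg s hst₀.le) (fun t ht => hderiv t (hst₀.le.trans ht))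
      (hineq.mono fun t ht hst => ht (hst₀.le.trans hst)) hst
  have hdecay : Tendsto (fun t => K * (φ s * Real.exp (-(α * (t - s))) + W / (1 - q))) atTop
      (𝓝 (K * (φ s * 0 + W / (1 - q)))) :=
    ((Real.tendsto_exp_atBot.comp (tendsto_neg_atTop_atBot.comp
      ((tendsto_atTop_add_const_right _ (-s) tendsto_id).const_mul_atTop hα))).const_mul _
      |>.add_const _ |>.const_mul _)
  rw [mul_zero, zero_add] at hdecay
  filter_upwards [hdecay.eventually (gt_mem_nhds hKW), eventually_ge_atTop s] with t h1 h2
  exact (hbound t h2).trans_lt h1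

theorem stmt_1 (a b : ℝ → ℝ) (T : ℝ) (hT : 0 < T)
    (ha : LocallyIntegrableOn a (Set.Ioi 0))
    (hb : LocallyIntegrableOn b (Set.Ioi 0))
    (hliminf : 0 < liminf (fun t => (1/T) * ∫ τ in t..(t+T), a τ) atTop)
    (haminus : IsBoundedUnder (· ≤ ·) atTop
      (fun t => (1/T) * ∫ τ in t..(t+T), max (-a τ) 0))
    (hbplusbd : IsBoundedUnder (· ≤ ·) atTop
      (fun t => (1/T) * ∫ τ in t..(t+T), max (b τ) 0))
    (hbplus : limsup (fun t => (1/T) * ∫ τ in t..(t+T), max (b τ) 0) atTop = 0)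
    (φ φ' : ℝ → ℝ)
    (hnonneg : ∀ t, 0 ≤ t → 0 ≤ φ t)
    (hderiv : ∀ t, 0 ≤ t → HasDerivAt φ (φ' t) t)
    (hineq : ∀ᵐ t ∂volume, 0 ≤ t → φ' t + a t * φ t ≤ b t) :
    Tendsto φ atTop (nhds 0) := by
  obtain ⟨α, hα, hwin_avg⟩ := exists_pos_eventually_lt_of_liminf_pos hliminf
  obtain ⟨M, hM⟩ := haminus
  refine tendsto_zero_of_window_bounds (M := M) hT hα ha hb ?_ ?_ ?_ hnonneg hderiv hineq
  · filter_upwards [hwin_avg] with r hr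
    rw [one_div_mul_eq_div, lt_div_iff₀ hT] at hr
    exact hr.le
  · filter_upwards [eventually_map.1 hM] with r hr
    rwa [one_div_mul_eq_div, div_le_iff₀ hT] at hr
  · intro ε hε
    filter_upwards [eventually_lt_of_limsup_lt (hbplus.trans_lt (div_pos hε hT)) hbplusbd]
      with r hr
    rw [one_div_mul_eq_div, div_lt_div_iff_of_pos_right hT] at hr
    exact hr.le
end

section
/- Suppose a nonnegative absolutely continuous φ on [t₀,∞) satisfies, almost everywhere, φ' ≤ -aφ + bφ^{3/2} + c with a,b,c > 0 and b√c < (a/2)^{3/2}, and φ(t₀) ≤ c/a. Then φ(t) < 2c/a for all t ≥ t₀ and, moreover, the threshold value φ* = 2c/a is a strict subsolution barrier: at any point where φ(t) = 2c/a one has -aφ + bφ^{3/2} + c < 0. -/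
/-!
Set `K = 2c/a`. The smallness condition is equivalent to `b √K < a/2`, so below the level `K`
the superlinear term is dominated by a linear one: `φ' ≤ -μ φ + c` with `μ = a - b √K`, and
`μ K > a K / 2 = c`. Hence `e^{μ t} (φ - K)` has negative derivative almost everywhere while it is
negative, and cannot reach `0`. Because the inequality only holds almost everywhere, this last
step uses Lusin's property (N) of differentiable functions instead of the mean value theorem.
-/

open MeasureTheory Set Filter Topology

theorem Real.rpow_three_halves {x : ℝ} (hx : 0 ≤ x) : x ^ ((3 : ℝ) / 2) = x * √x := by
  rw [show (3 : ℝ) / 2 = 1 + 1 / 2 by norm_num, Real.rpow_add' hx (by norm_num), Real.rpow_one,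
    Real.sqrt_eq_rpow]

theorem ContinuousOn.exists_last_eq {g : ℝ → ℝ} {u v y : ℝ} (huv : u ≤ v)
    (hg : ContinuousOn g (Icc u v)) (hu : g u < y) (hv : y < g v) :
    ∃ x ∈ Ioo u v, g x = y ∧ ∀ t ∈ Ioc x v, y < g t := by
  set S := Icc u v ∩ g ⁻¹' Iic y
  have hSbdd : BddAbove S := bddAbove_Icc.mono inter_subset_left
  have hxS : sSup S ∈ S :=
    (hg.preimage_isClosed_of_isClosed isClosed_Icc isClosed_Iic).csSup_mem
      ⟨u, ⟨le_rfl, huv⟩, hu.le⟩ hSbdd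
  set x := sSup S
  obtain ⟨⟨hux, hxv⟩, hgx⟩ := hxS
  replace hxv : x < v := hxv.lt_of_ne fun h ↦ hv.not_ge (h ▸ hgx)
  have hright : ∀ t ∈ Ioc x v, y < g t := fun t ht ↦
    lt_of_not_ge fun hgt ↦ ht.1.not_ge (le_csSup hSbdd ⟨⟨hux.trans ht.1.le, ht.2⟩, hgt⟩)
  have hyx : y ≤ g x := by
    have hlim : Tendsto g (𝓝[Ioc x v] x) (𝓝 (g x)) :=
      (hg x ⟨hux, hxv.le⟩).mono (Ioc_subset_Icc_self.trans (Icc_subset_Icc hux le_rfl))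
    have := left_nhdsWithin_Ioc_neBot hxv
    exact ge_of_tendsto hlim (eventually_nhdsWithin_of_forall fun t ht ↦ (hright t ht).le)
  have hgxy : g x = y := le_antisymm hgx hyx
  exact ⟨x, ⟨hux.lt_of_ne fun h ↦ hu.ne (h ▸ hgxy), hxv⟩, hgxy, hright⟩

theorem HasDerivAt.nonneg_of_le_right {g : ℝ → ℝ} {g' x v : ℝ} (hg : HasDerivAt g g' x)
    (hxv : x < v) (hle : ∀ t ∈ Ioc x v, g x ≤ g t) : 0 ≤ g' := by
  have hslope := hg.hasDerivWithinAt (s := Ioc x v)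
  rw [hasDerivWithinAt_iff_tendsto_slope' (fun h ↦ h.1.false)] at hslope
  have := left_nhdsWithin_Ioc_neBot hxv
  refine ge_of_tendsto hslope (eventually_nhdsWithin_of_forall fun t ht ↦ ?_)
  rw [slope_def_field]
  exact div_nonneg (sub_nonneg.2 (hle t ht)) (sub_nonneg.2 ht.1.le)

theorem lt_of_hasDerivAt_of_ae_deriv_neg {g g' : ℝ → ℝ} {u v L : ℝ} (huv : u ≤ v)
    (hcont : ContinuousOn g (Icc u v)) (hderiv : ∀ t ∈ Ioo u v, HasDerivAt g (g' t) t)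
    (hu : g u < L) (hneg : ∀ᵐ t, t ∈ Ioo u v → g t < L → g' t < 0) : g v < L := by
  by_contra! hv
  -- The image of the exceptional null set is null, so some level `y` avoids it; at the last time
  -- `g` takes the value `y`, its derivative is both `≥ 0` and `< 0`.
  set E := {t | ¬(t ∈ Ioo u v → g t < L → g' t < 0)}
  have hE : volume E = 0 := ae_iff.1 hneg
  have hEsub : E ⊆ Ioo u v := fun _ ht ↦ (Classical.not_imp.1 ht).1
  have hgE : volume (g '' E) = 0 :=
    addHaar_image_eq_zero_of_differentiableOn_of_addHaar_eq_zero volume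
      (fun t ht ↦ (hderiv t (hEsub ht)).differentiableAt.differentiableWithinAt) hE
  obtain ⟨y, ⟨hgu, hyL⟩, hyE⟩ : (Ioo (g u) L \ g '' E).Nonempty := by
    apply nonempty_of_measure_ne_zero (μ := volume)
    rw [measure_sdiff_null hgE]
    exact (Measure.measure_Ioo_pos volume).2 hu |>.ne'
  obtain ⟨x, hx, hgx, hright⟩ := hcont.exists_last_eq huv hgu (hyL.trans_le hv)
  have hxE : x ∉ E := fun h ↦ hyE ⟨x, h, hgx⟩
  have hnonneg : 0 ≤ g' x :=
    (hderiv x hx).nonneg_of_le_right hx.2 fun t ht ↦ hgx ▸ (hright t ht).le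
  exact (not_not.1 hxE hx (hgx ▸ hyL)).not_ge hnonneg

theorem lt_of_ae_deriv_le_linear {φ φ' : ℝ → ℝ} {t₀ K μ c : ℝ}
    (hderiv : ∀ t, t₀ ≤ t → HasDerivAt φ (φ' t) t)
    (hineq : ∀ᵐ t, t₀ ≤ t → φ t < K → φ' t ≤ -μ * φ t + c)
    (hK : c < μ * K) (hinit : φ t₀ < K) {t : ℝ} (ht : t₀ ≤ t) : φ t < K := by
  set ψ := fun s ↦ Real.exp (μ * s) * (φ s - K)
  have hψ : ∀ s, t₀ ≤ s →
      HasDerivAt ψ (Real.exp (μ * s) * (μ * (φ s - K) + φ' s)) s := fun s hs ↦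
    (((hasDerivAt_id s).const_mul μ).exp.mul ((hderiv s hs).sub_const K)).congr_deriv
      (by simp only [id, mul_one]; ring)
  have hψt : ψ t < 0 := by
    refine lt_of_hasDerivAt_of_ae_deriv_neg ht
      (fun s hs ↦ (hψ s hs.1).continuousAt.continuousWithinAt)
      (fun s hs ↦ hψ s hs.1.le) (mul_neg_of_pos_of_neg (Real.exp_pos _) (sub_neg.2 hinit)) ?_
    filter_upwards [hineq] with s hs hsI hψs
    have hφs : φ s < K := sub_neg.1 (neg_of_mul_neg_right hψs (Real.exp_pos _).le)
    refine mul_neg_of_pos_of_neg (Real.exp_pos _) ?_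
    linarith [hs hsI.1.le hφs]
  exact sub_neg.1 (neg_of_mul_neg_right hψt (Real.exp_pos _).le)

theorem mul_sqrt_div_lt {b c s : ℝ} (hs : 0 < s) (h : b * √c < s ^ ((3 : ℝ) / 2)) :
    b * √(c / s) < s := by
  rw [Real.sqrt_div' c hs.le, mul_div_assoc', div_lt_iff₀ (Real.sqrt_pos.2 hs)]
  rwa [Real.rpow_three_halves hs.le] at h

theorem stmt_13 (a b c t₀ : ℝ) (ha : 0 < a) (hb : 0 < b) (hc : 0 < c)
    (hcond : b * Real.sqrt c < (a / 2) ^ ((3:ℝ)/2))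
    (φ φ' : ℝ → ℝ)
    (hnonneg : ∀ t, t₀ ≤ t → 0 ≤ φ t)
    (hderiv : ∀ t, t₀ ≤ t → HasDerivAt φ (φ' t) t)
    (hineq : ∀ᵐ t ∂volume, t₀ ≤ t → φ' t ≤ -a * φ t + b * φ t ^ ((3:ℝ)/2) + c)
    (hinit : φ t₀ ≤ c / a) :
    (∀ t, t₀ ≤ t → φ t < 2 * c / a) ∧
      b * (2 * c / a) ^ ((3:ℝ)/2) + c < a * (2 * c / a) := by
  set K := 2 * c / a with hKdef
  have hKpos : 0 < K := by positivity
  have haK : a * K = 2 * c := by rw [hKdef]; field_simp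
  have hslope : b * √K < a / 2 := by
    have hK : K = c / (a / 2) := by rw [hKdef]; field_simp
    exact hK ▸ mul_sqrt_div_lt (half_pos ha) hcond
  have hbK : b * K ^ ((3 : ℝ) / 2) < c := by
    rw [Real.rpow_three_halves hKpos.le]
    linarith [mul_lt_mul_of_pos_left hslope hKpos]
  have hlin : ∀ᵐ t, t₀ ≤ t → φ t < K → φ' t ≤ -(a - b * √K) * φ t + c := by
    filter_upwards [hineq] with t h ht hφK
    have hφ := hnonneg t ht
    have : b * φ t ^ ((3 : ℝ) / 2) ≤ b * √K * φ t := by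
      rw [Real.rpow_three_halves hφ]
      linarith [mul_le_mul_of_nonneg_left (Real.sqrt_le_sqrt hφK.le) (mul_nonneg hb.le hφ)]
    linarith [h ht]
  have hdecay : c < (a - b * √K) * K := by linarith [mul_lt_mul_of_pos_right hslope hKpos]
  have hφK : φ t₀ < K := hinit.trans_lt (by rw [hKdef, mul_div_assoc]; linarith [div_pos hc ha])
  exact ⟨fun t ht ↦ lt_of_ae_deriv_le_linear hderiv hlin hdecay hφK ht, by linarith⟩
end

section
/- Let A be a symmetric positive definite n×n matrix with smallest eigenvalue λ₁ and let z solve (I + α²A)z' + νAz = g(t) with z(0) = 0, where g : [0,T] → ℝⁿ is bounded. Then for all t ∈ [0,T], ⟨Az(t), z(t)⟩^{1/2} ≤ sup_{s∈[0,T]} |A^{-1/2}g(s)| / (αν√d₀), where d₀ = (1/λ₁ + α²)⁻¹. -/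
/-!
Testing the equation against `z` gives the energy identity `E' = 2⟨g, z⟩ - 2ν⟨Az, z⟩` for
`E = |z|² + α²⟨Az, z⟩`. Cauchy–Schwarz for the inner product `⟨A·, ·⟩` bounds `⟨g, z⟩` by
`|A^{-1/2} g| ⟨Az, z⟩^{1/2}`, Young's inequality absorbs the result into half of the dissipation,
and `λ₁|z|² ≤ ⟨Az, z⟩` gives `d₀ E ≤ ⟨Az, z⟩`. Hence `E' ≤ ν d₀ (M² / (ν² d₀) - E)`, so `E`, which
starts at `0`, never exceeds `M² / (ν² d₀)`; finally `α²⟨Az, z⟩ ≤ E`.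
-/

open Matrix Set

theorem le_of_hasDerivAt_le_mul_sub {f f' : ℝ → ℝ} {a b k C : ℝ}
    (hf : ∀ t ∈ Icc a b, HasDerivAt f (f' t) t) (hf' : ∀ t ∈ Icc a b, f' t ≤ k * (C - f t))
    (ha : f a ≤ C) : ∀ t ∈ Icc a b, f t ≤ C := by
  set F : ℝ → ℝ := fun s => Real.exp (k * s) * (f s - C)
  have hF : ∀ t ∈ Icc a b, HasDerivAt F (Real.exp (k * t) * (f' t - k * (C - f t))) t :=
    fun t ht => (((hasDerivAt_id t).const_mul k).exp.mul ((hf t ht).sub_const C)).congr_deriv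
      (by simp only [id, mul_one]; ring)
  have hanti : AntitoneOn F (Icc a b) := by
    refine antitoneOn_of_hasDerivWithinAt_nonpos (convex_Icc a b)
      (fun t ht => (hF t ht).continuousAt.continuousWithinAt)
      (fun t ht => (hF t (interior_subset ht)).hasDerivWithinAt) fun t ht => ?_
    exact mul_nonpos_of_nonneg_of_nonpos (Real.exp_pos _).le
      (sub_nonpos.2 (hf' t (interior_subset ht)))
  intro t ht
  have hFt : F t ≤ F a := hanti (left_mem_Icc.2 (ht.1.trans ht.2)) ht ht.1
  have hFa : F a ≤ 0 := mul_nonpos_of_nonneg_of_nonpos (Real.exp_pos _).le (sub_nonpos.2 ha)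
  exact sub_nonpos.1 <| nonpos_of_mul_nonpos_right (hFt.trans hFa) (Real.exp_pos _)

variable {ι : Type*} [Fintype ι]

section Calculus

variable {𝕜 : Type*} [NontriviallyNormedField 𝕜] {m : Type*}

theorem HasDerivAt.dotProduct {u v : 𝕜 → ι → 𝕜} {u' v' : ι → 𝕜} {t : 𝕜}
    (hu : HasDerivAt u u' t) (hv : HasDerivAt v v' t) :
    HasDerivAt (fun s => u s ⬝ᵥ v s) (u' ⬝ᵥ v t + u t ⬝ᵥ v') t := by
  have h : HasDerivAt (fun s => ∑ i, u s i * v s i) (∑ i, (u' i * v t i + u t i * v' i)) t :=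
    HasDerivAt.fun_sum fun i _ => (hasDerivAt_pi.1 hu i).mul (hasDerivAt_pi.1 hv i)
  rwa [Finset.sum_add_distrib] at h

theorem HasDerivAt.mulVec (A : Matrix m ι 𝕜) {z : 𝕜 → ι → 𝕜} {z' : ι → 𝕜} {t : 𝕜}
    (hz : HasDerivAt z z' t) :
    HasDerivAt (fun s => A *ᵥ z s) (A *ᵥ z') t :=
  hasDerivAt_pi.2 fun i =>
    HasDerivAt.fun_sum (u := Finset.univ) fun j _ => (hasDerivAt_pi.1 hz j).const_mul (A i j)

end Calculus

theorem Matrix.IsSymm.mulVec_dotProduct_comm {R : Type*} [CommSemiring R] {A : Matrix ι ι R}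
    (hA : A.IsSymm) (x y : ι → R) : (A *ᵥ x) ⬝ᵥ y = (A *ᵥ y) ⬝ᵥ x := by
  rw [dotProduct_comm, dotProduct_mulVec, ← mulVec_transpose, hA.eq]

theorem Matrix.PosSemidef.mulVec_dotProduct_sq_le {A : Matrix ι ι ℝ} (hA : A.PosSemidef)
    (x y : ι → ℝ) : ((A *ᵥ x) ⬝ᵥ y) ^ 2 ≤ ((A *ᵥ x) ⬝ᵥ x) * ((A *ᵥ y) ⬝ᵥ y) := by
  have hsymm := (isHermitian_iff_isSymm.1 hA.isHermitian).mulVec_dotProduct_comm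
  have hquad : ∀ s : ℝ, 0 ≤ (A *ᵥ y) ⬝ᵥ y * (s * s) + 2 * ((A *ᵥ x) ⬝ᵥ y) * s
      + (A *ᵥ x) ⬝ᵥ x := fun s => by
    have h := hA.dotProduct_mulVec_nonneg (x + s • y)
    rw [star_trivial, dotProduct_comm] at h
    simp only [mulVec_add, mulVec_smul, add_dotProduct, dotProduct_add, smul_dotProduct,
      dotProduct_smul, smul_eq_mul, hsymm y x] at h
    linarith
  have h := discrim_le_zero hquad
  rw [discrim] at h
  linarith

theorem Matrix.PosDef.dotProduct_le_sqrt_mul_sqrt [DecidableEq ι] {A : Matrix ι ι ℝ}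
    (hA : A.PosDef) (g z : ι → ℝ) :
    g ⬝ᵥ z ≤ √((A⁻¹ *ᵥ g) ⬝ᵥ g) * √((A *ᵥ z) ⬝ᵥ z) := by
  have hg : A *ᵥ (A⁻¹ *ᵥ g) = g := by
    rw [mulVec_mulVec, mul_nonsing_inv A ((isUnit_iff_isUnit_det A).1 hA.isUnit), one_mulVec]
  have hcs := hA.posSemidef.mulVec_dotProduct_sq_le (A⁻¹ *ᵥ g) z
  rw [hg, dotProduct_comm g (A⁻¹ *ᵥ g)] at hcs
  have hnonneg : 0 ≤ (A⁻¹ *ᵥ g) ⬝ᵥ g := by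
    simpa [dotProduct_comm] using hA.inv.posSemidef.dotProduct_mulVec_nonneg g
  rw [← Real.sqrt_mul hnonneg]
  exact (le_abs_self _).trans (Real.abs_le_sqrt hcs)

section VoigtEnergy

variable {A : Matrix ι ι ℝ} {α : ℝ}

def voigtEnergy (A : Matrix ι ι ℝ) (α : ℝ) (x : ι → ℝ) : ℝ :=
  x ⬝ᵥ x + α ^ 2 * ((A *ᵥ x) ⬝ᵥ x)

theorem sq_mul_le_voigtEnergy (x : ι → ℝ) : α ^ 2 * ((A *ᵥ x) ⬝ᵥ x) ≤ voigtEnergy A α x := by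
  have : 0 ≤ x ⬝ᵥ x := by simpa using dotProduct_self_star_nonneg x
  unfold voigtEnergy
  linarith

theorem voigtEnergy_le {lam : ℝ} (hlam : 0 < lam) {x : ι → ℝ}
    (hx : lam * (x ⬝ᵥ x) ≤ (A *ᵥ x) ⬝ᵥ x) :
    voigtEnergy A α x ≤ (1 / lam + α ^ 2) * ((A *ᵥ x) ⬝ᵥ x) := by
  have : x ⬝ᵥ x ≤ 1 / lam * ((A *ᵥ x) ⬝ᵥ x) := by
    rw [one_div_mul_eq_div, le_div_iff₀ hlam]
    linarith
  unfold voigtEnergy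
  linarith

theorem hasDerivAt_voigtEnergy (hA : A.IsSymm) {ν : ℝ} {z : ℝ → ι → ℝ} {z' g : ι → ℝ} {t : ℝ}
    (hz : HasDerivAt z z' t) (heq : z' + α ^ 2 • (A *ᵥ z') + ν • (A *ᵥ z t) = g) :
    HasDerivAt (fun s => voigtEnergy A α (z s))
      (2 * (g ⬝ᵥ z t) - 2 * ν * ((A *ᵥ z t) ⬝ᵥ z t)) t := by
  have h := (hz.dotProduct hz).add (((hz.mulVec A).dotProduct hz).const_mul (α ^ 2))
  refine h.congr_deriv ?_
  rw [← heq, dotProduct_comm (z t), hA.mulVec_dotProduct_comm (z t)]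
  simp only [add_dotProduct, smul_dotProduct, smul_eq_mul]
  ring

theorem voigtEnergy_rate_le [DecidableEq ι] (hA : A.PosDef) {lam ν M : ℝ} (hlam : 0 < lam)
    (hν : 0 < ν) {g x : ι → ℝ} (hx : lam * (x ⬝ᵥ x) ≤ (A *ᵥ x) ⬝ᵥ x)
    (hg : √((A⁻¹ *ᵥ g) ⬝ᵥ g) ≤ M) :
    2 * (g ⬝ᵥ x) - 2 * ν * ((A *ᵥ x) ⬝ᵥ x) ≤
      ν * (1 / lam + α ^ 2)⁻¹ * (M ^ 2 / (ν ^ 2 * (1 / lam + α ^ 2)⁻¹) - voigtEnergy A α x) := by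
  set d := (1 / lam + α ^ 2)⁻¹
  set Q := (A *ᵥ x) ⬝ᵥ x
  have hd : 0 < d := by positivity
  have hQ : 0 ≤ Q := by simpa [Q, dotProduct_comm] using hA.posSemidef.dotProduct_mulVec_nonneg x
  have hgx : g ⬝ᵥ x ≤ M * √Q :=
    (hA.dotProduct_le_sqrt_mul_sqrt g x).trans (mul_le_mul_of_nonneg_right hg (Real.sqrt_nonneg _))
  have hEQ : d * voigtEnergy A α x ≤ Q :=
    calc d * voigtEnergy A α x ≤ d * ((1 / lam + α ^ 2) * Q) := by
          gcongr; exact voigtEnergy_le hlam hx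
      _ = Q := inv_mul_cancel_left₀ (by positivity) Q
  have hyoung : 2 * (M * √Q) ≤ M ^ 2 / ν + ν * Q := by
    rw [div_add' _ _ _ hν.ne', le_div_iff₀ hν]
    linear_combination sq_nonneg (M - ν * √Q) + ν ^ 2 * Real.sq_sqrt hQ
  have hK : ν * d * (M ^ 2 / (ν ^ 2 * d)) = M ^ 2 / ν := by field_simp
  rw [mul_sub, hK]
  nlinarith [mul_le_mul_of_nonneg_left hEQ hν.le]

end VoigtEnergy

theorem stmt_16_general (n : ℕ) (A : Matrix (Fin n) (Fin n) ℝ)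
    (hApos : A.PosDef)
    (lam₁ ν α T : ℝ) (hlam₁ : 0 < lam₁) (hν : 0 < ν) (hα : 0 < α)
    (hspec : ∀ x : Fin n → ℝ, lam₁ * (x ⬝ᵥ x) ≤ (A *ᵥ x) ⬝ᵥ x)
    (d₀ : ℝ) (hd₀ : d₀ = (1/lam₁ + α^2)⁻¹)
    (g : ℝ → (Fin n → ℝ)) (M : ℝ)
    (hM : ∀ s ∈ Set.Icc (0:ℝ) T, Real.sqrt ((A⁻¹ *ᵥ g s) ⬝ᵥ g s) ≤ M)
    (z z' : ℝ → (Fin n → ℝ)) (hz0 : z 0 = 0)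
    (hderiv : ∀ t ∈ Set.Icc (0:ℝ) T, HasDerivAt z (z' t) t)
    (heq : ∀ t ∈ Set.Icc (0:ℝ) T, z' t + α^2 • (A *ᵥ z' t) + ν • (A *ᵥ z t) = g t) :
    ∀ t ∈ Set.Icc (0:ℝ) T,
      Real.sqrt ((A *ᵥ z t) ⬝ᵥ z t) ≤ M / (α * ν * Real.sqrt d₀) := by
  have hd₀pos : 0 < d₀ := by rw [hd₀]; positivity
  have hE : ∀ s ∈ Icc 0 T, HasDerivAt (fun s => voigtEnergy A α (z s))
      (2 * (g s ⬝ᵥ z s) - 2 * ν * ((A *ᵥ z s) ⬝ᵥ z s)) s :=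
    fun s hs => hasDerivAt_voigtEnergy (isHermitian_iff_isSymm.1 hApos.isHermitian)
      (hderiv s hs) (heq s hs)
  have hE' : ∀ s ∈ Icc 0 T, 2 * (g s ⬝ᵥ z s) - 2 * ν * ((A *ᵥ z s) ⬝ᵥ z s)
      ≤ ν * d₀ * (M ^ 2 / (ν ^ 2 * d₀) - voigtEnergy A α (z s)) :=
    fun s hs => hd₀ ▸ voigtEnergy_rate_le hApos hlam₁ hν (hspec (z s)) (hM s hs)
  intro t ht
  have hM0 : 0 ≤ M := (Real.sqrt_nonneg _).trans (hM 0 ⟨le_rfl, ht.1.trans ht.2⟩)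
  have hEt := le_of_hasDerivAt_le_mul_sub hE hE' (by simp [voigtEnergy, hz0]; positivity) t ht
  have hQt := (sq_mul_le_voigtEnergy (z t)).trans hEt
  rw [le_div_iff₀ (by positivity)] at hQt
  rw [Real.sqrt_le_left (by positivity), div_pow, mul_pow, mul_pow, Real.sq_sqrt hd₀pos.le,
    le_div_iff₀ (by positivity)]
  linarith

theorem stmt_16 (n : ℕ) (A : Matrix (Fin n) (Fin n) ℝ)
    (hA : A.IsSymm) (hApos : A.PosDef)
    (lam₁ ν α T : ℝ) (hlam₁ : 0 < lam₁) (hν : 0 < ν) (hα : 0 < α) (hT : 0 < T)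
    (hspec : ∀ x : Fin n → ℝ, lam₁ * (x ⬝ᵥ x) ≤ (A *ᵥ x) ⬝ᵥ x)
    (d₀ : ℝ) (hd₀ : d₀ = (1/lam₁ + α^2)⁻¹)
    (g : ℝ → (Fin n → ℝ)) (M : ℝ)
    (hM : ∀ s ∈ Set.Icc (0:ℝ) T, Real.sqrt ((A⁻¹ *ᵥ g s) ⬝ᵥ g s) ≤ M)
    (z z' : ℝ → (Fin n → ℝ)) (hz0 : z 0 = 0)
    (hderiv : ∀ t ∈ Set.Icc (0:ℝ) T, HasDerivAt z (z' t) t)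
    (heq : ∀ t ∈ Set.Icc (0:ℝ) T, z' t + α^2 • (A *ᵥ z' t) + ν • (A *ᵥ z t) = g t) :
    ∀ t ∈ Set.Icc (0:ℝ) T,
      Real.sqrt ((A *ᵥ z t) ⬝ᵥ z t) ≤ M / (α * ν * Real.sqrt d₀) :=
  stmt_16_general n A hApos lam₁ ν α T hlam₁ hν hα hspec d₀ hd₀ g M hM z z' hz0 hderiv heq
end
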